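/- arXiv:1004.4800 — 2 statements merged into one kernel-verified Lean document; each statement's English description precedes it below -/
import Mathlib

section
/- Let A ∈ SL(2,R) be non-orthogonal, define H_A(p) = p − Φ_A(p) on P^1, and let Ψ_A = Φ_M be the involution from the singular value decomposition. Then H_A ∘ Ψ_A = H_A. -/
/-! The matrix `B = A M = S J R`, with `J` the coordinate swap, is orthogonal of determinant `-1`,
hence a reflection `p ↦ α - p` on `P¹`. Since `M` and `B` are involutions, `M = B A`, so
`Φ_A (Ψ_A p) ≡ α - p` and `Ψ_A p ≡ α - Φ_A p` modulo `π`; subtracting gives the claim. -/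

open Real MeasureTheory intervalIntegral Matrix Polynomial

noncomputable section

/-- 2×2 real matrices. -/
abbrev Mat := Matrix (Fin 2) (Fin 2) ℝ

/-- The unit vector `v_p = (cos p, sin p)` spanning the line `ℓ_p ∈ P¹ = ℝ/πℤ`. -/
def vec (p : ℝ) : Fin 2 → ℝ := ![Real.cos p, Real.sin p]

/-- Euclidean norm on ℝ². -/
def en (w : Fin 2 → ℝ) : ℝ := Real.sqrt (w 0 ^ 2 + w 1 ^ 2)

/-- Rotation matrix by angle θ. -/
def Rot (θ : ℝ) : Mat := !![Real.cos θ, -Real.sin θ; Real.sin θ, Real.cos θ]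

/-- `parr w q` : the vector `w` is parallel to `v_q` (i.e. `w ∈ ℓ_q`). -/
def parr (w : Fin 2 → ℝ) (q : ℝ) : Prop := w 0 * Real.sin q - w 1 * Real.cos q = 0

/-- `IsLift A Φ` : `Φ : ℝ → ℝ` is a lift (mod π) of the projective action `Φ_A` of `A` on P¹. -/
def IsLift (A : Mat) (Φ : ℝ → ℝ) : Prop := ∀ p : ℝ, parr (A.mulVec (vec p)) (Φ p)

/-- Operator (Euclidean) norm of a 2×2 matrix: sup of `‖A v_p‖` over the unit circle. -/
def opN (A : Mat) : ℝ := ⨆ p : ℝ, en (A.mulVec (vec p))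

/-- Spectral radius of a real 2×2 matrix: the largest modulus of its complex eigenvalues. -/
def spectralRad (B : Mat) : ℝ :=
  sSup {x : ℝ | ∃ z : ℂ, (B.charpoly.map (algebraMap ℝ ℂ)).IsRoot z ∧ x = ‖z‖}

/-- The word product `R_θ A = (R_θ A₁)⋯(R_θ Aₙ)` of a list of matrices. -/
def Wp (θ : ℝ) (l : List Mat) : Mat := (l.map fun B => Rot θ * B).prod

lemma vec_ne_zero (p : ℝ) : _root_.vec p ≠ 0 := fun h => by
  have h0 := congrFun h 0
  have h1 := congrFun h 1
  simp only [_root_.vec, cons_val_zero, cons_val_one, Pi.zero_apply] at h0 h1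
  simpa [h0, h1] using sin_sq_add_cos_sq p

lemma parr_iff_exists_eq_smul_vec {w : Fin 2 → ℝ} {q : ℝ} :
    parr w q ↔ ∃ s : ℝ, w = s • _root_.vec q := by
  constructor
  · intro h
    refine ⟨w 0 * cos q + w 1 * sin q, funext fun i => ?_⟩
    fin_cases i <;>
      simp only [parr, _root_.vec, Pi.smul_apply, smul_eq_mul, cons_val_zero, cons_val_one,
        Fin.zero_eta, Fin.mk_one] at h ⊢
    · linear_combination sin q * h - w 0 * sin_sq_add_cos_sq q
    · linear_combination -cos q * h - w 1 * sin_sq_add_cos_sq q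
  · rintro ⟨s, rfl⟩
    simp only [parr, _root_.vec, Pi.smul_apply, smul_eq_mul, cons_val_zero, cons_val_one]
    ring

lemma parr_smul_vec_iff {s : ℝ} (hs : s ≠ 0) {p q : ℝ} :
    parr (s • _root_.vec p) q ↔ ∃ k : ℤ, q = p + k * π := by
  have : parr (s • _root_.vec p) q ↔ s * sin (q - p) = 0 := by
    simp only [parr, _root_.vec, sin_sub, Pi.smul_apply, smul_eq_mul, cons_val_zero, cons_val_one]
    constructor <;> intro h <;> linear_combination h
  rw [this, mul_eq_zero, or_iff_right hs, sin_eq_zero_iff]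
  exact exists_congr fun k => by constructor <;> intro h <;> linarith

lemma parr_vec_iff {p q : ℝ} : parr (_root_.vec p) q ↔ ∃ k : ℤ, q = p + k * π := by
  simpa using parr_smul_vec_iff one_ne_zero (p := p) (q := q)

lemma parr.exists_eq_add_int_mul_pi {w : Fin 2 → ℝ} {q r : ℝ} (hw : w ≠ 0)
    (hq : parr w q) (hr : parr w r) : ∃ k : ℤ, r = q + k * π := by
  obtain ⟨s, rfl⟩ := parr_iff_exists_eq_smul_vec.1 hq
  exact (parr_smul_vec_iff (left_ne_zero_of_smul hw)).1 hr

lemma parr_mul_mulVec_vec {A B : Mat} {p q r : ℝ} (hA : parr (A *ᵥ _root_.vec p) q)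
    (hB : parr (B *ᵥ _root_.vec q) r) : parr ((B * A) *ᵥ _root_.vec p) r := by
  obtain ⟨s, hs⟩ := parr_iff_exists_eq_smul_vec.1 hA
  obtain ⟨t, ht⟩ := parr_iff_exists_eq_smul_vec.1 hB
  rw [parr_iff_exists_eq_smul_vec]
  exact ⟨s * t, by rw [← mulVec_mulVec, hs, mulVec_smul, ht, smul_smul]⟩

def reflMat (α : ℝ) : Mat := !![cos α, sin α; sin α, -cos α]

lemma reflMat_mulVec_vec (α p : ℝ) : reflMat α *ᵥ _root_.vec p = _root_.vec (α - p) := by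
  ext i
  fin_cases i <;>
    simp only [mulVec, dotProduct, reflMat, _root_.vec, Fin.sum_univ_two, of_apply, cons_val',
      cons_val_fin_one, cons_val_zero, cons_val_one, Fin.zero_eta, Fin.mk_one, cos_sub, sin_sub]
  ring

lemma reflMat_mul_self (α : ℝ) : reflMat α * reflMat α = 1 := by
  rw [reflMat, mul_fin_two, one_fin_two]
  simp [← sq, mul_comm (sin α)]

lemma exists_cos_sin_eq {a c : ℝ} (h : a ^ 2 + c ^ 2 = 1) : ∃ α : ℝ, cos α = a ∧ sin α = c := by
  have hz : ‖(⟨a, c⟩ : ℂ)‖ = 1 := by simp [Complex.norm_eq_sqrt_sq_add_sq, h]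
  refine ⟨Complex.arg ⟨a, c⟩, ?_, ?_⟩
  · simpa [hz] using Complex.norm_mul_cos_arg ⟨a, c⟩
  · simpa [hz] using Complex.norm_mul_sin_arg ⟨a, c⟩

lemma exists_eq_reflMat {B : Mat} (hB : Bᵀ * B = 1) (hdet : B.det = -1) :
    ∃ α : ℝ, B = reflMat α := by
  have e00 := congrFun (congrFun hB 0) 0
  have e01 := congrFun (congrFun hB 0) 1
  simp only [mul_apply, transpose_apply, Fin.sum_univ_two, one_apply_eq,
    one_apply_ne zero_ne_one] at e00 e01
  rw [det_fin_two] at hdet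
  have hb : B 0 1 = B 1 0 := by
    linear_combination B 0 0 * e01 - B 1 0 * hdet - B 0 1 * e00
  have hd : B 1 1 = -B 0 0 := by
    linear_combination B 0 0 * hdet + B 1 0 * e01 - B 1 1 * e00
  obtain ⟨α, hc, hs⟩ := exists_cos_sin_eq (a := B 0 0) (c := B 1 0) (by linear_combination e00)
  refine ⟨α, ?_⟩
  ext i j
  fin_cases i <;> fin_cases j <;> simp [reflMat, hb, hd, hc, hs]

lemma conj_mul_self_eq_one {n α : Type*} [Fintype n] [DecidableEq n] [CommRing α]
    {R N : Matrix n n α} (hR : IsUnit R.det) (hN : N * N = 1) :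
    (R⁻¹ * N * R) * (R⁻¹ * N * R) = 1 := by
  calc (R⁻¹ * N * R) * (R⁻¹ * N * R) = R⁻¹ * (N * (R * R⁻¹) * N) * R := by
        simp only [Matrix.mul_assoc]
    _ = 1 := by rw [mul_nonsing_inv R hR, Matrix.mul_one, hN, Matrix.mul_one, nonsing_inv_mul R hR]

lemma antidiag_mul_self {l : ℝ} (hl : l ≠ 0) :
    (!![0, l⁻¹; l, 0] : Mat) * !![0, l⁻¹; l, 0] = 1 := by
  rw [mul_fin_two, one_fin_two]
  simp [hl]

lemma diag_mul_antidiag {l : ℝ} (hl : l ≠ 0) :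
    (!![l, 0; 0, l⁻¹] : Mat) * !![0, l⁻¹; l, 0] = !![0, 1; 1, 0] := by
  rw [mul_fin_two]
  simp [hl]

lemma exists_mul_conj_antidiag_eq_reflMat {A S R : Mat} {l : ℝ} (hl : l ≠ 0)
    (hS : Sᵀ * S = 1) (hR : Rᵀ * R = 1) (hA : A = S * !![l, 0; 0, l⁻¹] * R)
    (hdet : A.det = 1) : ∃ α : ℝ, A * (R⁻¹ * !![0, l⁻¹; l, 0] * R) = reflMat α := by
  have hRu : IsUnit R.det := isUnit_det_of_left_inverse hR
  have hAM : A * (R⁻¹ * !![0, l⁻¹; l, 0] * R) = S * !![0, 1; 1, 0] * R := by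
    calc A * (R⁻¹ * !![0, l⁻¹; l, 0] * R)
        = S * !![l, 0; 0, l⁻¹] * (R * R⁻¹) * !![0, l⁻¹; l, 0] * R := by
          simp only [hA, Matrix.mul_assoc]
      _ = S * !![0, 1; 1, 0] * R := by
          rw [mul_nonsing_inv R hRu, Matrix.mul_one, Matrix.mul_assoc S, diag_mul_antidiag hl]
  apply exists_eq_reflMat
  · have hJ : (!![0, 1; 1, 0] : Mat) ∈ orthogonalGroup (Fin 2) ℝ := by
      rw [mem_orthogonalGroup_iff']
      simp [← Matrix.ext_iff, Fin.forall_fin_two, mul_apply, one_apply]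
    rw [hAM, ← mem_orthogonalGroup_iff']
    exact mul_mem (mul_mem ((mem_orthogonalGroup_iff' _ _).2 hS) hJ)
      ((mem_orthogonalGroup_iff' _ _).2 hR)
  · rw [det_mul, hdet, det_conj' ((isUnit_iff_isUnit_det R).2 hRu), det_fin_two_of]
    simp [hl]

theorem stmt5_general (A S R : Mat) (l : ℝ) (hl : 1 < l)
    (hS : Sᵀ * S = 1) (hR : Rᵀ * R = 1)
    (hA : A = S * !![l, 0; 0, l⁻¹] * R) (hdet : A.det = 1)
    (M : Mat) (hM : M = R⁻¹ * !![0, l⁻¹; l, 0] * R)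
    (Ψ : ℝ → ℝ) (hΨ : IsLift M Ψ)
    (Φ : ℝ → ℝ) (hΦ : IsLift A Φ) :
    ∀ p : ℝ, ∃ k : ℤ, Ψ p - Φ (Ψ p) = (p - Φ p) + k * π := by
  have hl0 : l ≠ 0 := (zero_lt_one.trans hl).ne'
  have hMM : M * M = 1 := hM ▸ conj_mul_self_eq_one (isUnit_det_of_left_inverse hR)
    (antidiag_mul_self hl0)
  obtain ⟨α, hα⟩ := exists_mul_conj_antidiag_eq_reflMat hl0 hS hR hA hdet
  rw [← hM] at hα
  have hM_eq : M = reflMat α * A := by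
    calc M = reflMat α * reflMat α * M := by rw [reflMat_mul_self, Matrix.one_mul]
      _ = reflMat α * A * (M * M) := by rw [← hα]; simp only [Matrix.mul_assoc]
      _ = reflMat α * A := by rw [hMM, Matrix.mul_one]
  intro p
  obtain ⟨k₁, hk₁⟩ : ∃ k : ℤ, Φ (Ψ p) = α - p + k * π := by
    rw [← parr_vec_iff, ← reflMat_mulVec_vec, ← hα]
    exact parr_mul_mulVec_vec (hΨ p) (hΦ (Ψ p))
  obtain ⟨k₂, hk₂⟩ : ∃ k : ℤ, Ψ p = α - Φ p + k * π := by
    have hMp : M *ᵥ _root_.vec p ≠ 0 := fun h => vec_ne_zero p <| by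
      rw [← one_mulVec (_root_.vec p), ← hMM, ← mulVec_mulVec, h, mulVec_zero]
    refine parr.exists_eq_add_int_mul_pi hMp ?_ (hΨ p)
    rw [hM_eq]
    exact parr_mul_mulVec_vec (hΦ p) (by rw [reflMat_mulVec_vec, parr_vec_iff]; exact ⟨0, by simp⟩)
  exact ⟨k₂ - k₁, by rw [hk₁, hk₂]; push_cast; ring⟩

/-- `H_A ∘ Ψ_A = H_A` on P¹, where `H_A(p) = p - Φ_A(p)`. -/
theorem stmt5 (A S R : Mat) (l : ℝ) (hl : 1 < l)
    (hS : Sᵀ * S = 1) (hR : Rᵀ * R = 1)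
    (hA : A = S * !![l, 0; 0, l⁻¹] * R) (hdet : A.det = 1)
    (M : Mat) (hM : M = R⁻¹ * !![0, l⁻¹; l, 0] * R)
    (Ψ : ℝ → ℝ) (hΨ : IsLift M Ψ) (hΨc : Continuous Ψ)
    (Φ : ℝ → ℝ) (hΦ : IsLift A Φ) (hΦc : Continuous Φ) :
    ∀ p : ℝ, ∃ k : ℤ, Ψ p - Φ (Ψ p) = (p - Φ p) + k * π :=
  stmt5_general A S R l hl hS hR hA hdet M hM Ψ hΨ Φ hΦ
end
end

section
/- Let A₁,…,Aₙ ∈ SL(2,R), fix p ∈ P^1, and let f : P^1 → P^1 be f(θ) = Φ_{(R_θA₁)⋯(R_θAₙ)}(p). Then f preserves the normalized Haar measure on P^1. -/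
/-!
Identify `ℝ²` with `ℂ`. A real `2 × 2` matrix `A` acts as `z ↦ α z + β z̄` with
`|α|² - |β|² = det A`, so on directions `u = z / z̄ ∈ S¹` (the line `ℓ_p` corresponds to `e^{2ip}`)
it acts by the disc automorphism `u ↦ (α u + β) / (β̄ u + ᾱ)`, while `R_θ` multiplies `u` by
`e^{2iθ}`. Hence `e^{2iF(θ)} = B(e^{2iθ})` for a finite Blaschke product `B` with `B(0) = 0`.
By the mean value property `∫₀^π B(e^{2iθ})^k dθ = π B(0)^k = 0` for `k ≥ 1`, and by conjugation
also for `k ≤ -1`. So `θ ↦ F θ mod π` pushes Lebesgue measure to a measure with the Fourier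
coefficients of Lebesgue measure, and trigonometric polynomials are dense in `C(ℝ/πℤ)`.
-/

open Real MeasureTheory intervalIntegral Matrix Polynomial

noncomputable section

open Complex ComplexConjugate Metric

def intervalIntegralCompCLM {X : Type*} [TopologicalSpace X] [CompactSpace X] (a b : ℝ)
    (φ : C(ℝ, X)) : C(X, ℂ) →L[ℂ] ℂ :=
  LinearMap.mkContinuous
    { toFun := fun g => ∫ θ in a..b, g (φ θ)
      map_add' := fun g₁ g₂ => intervalIntegral.integral_add
        ((g₁.continuous.comp φ.continuous).intervalIntegrable a b)
        ((g₂.continuous.comp φ.continuous).intervalIntegrable a b)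
      map_smul' := fun c g => intervalIntegral.integral_smul c _ }
    |b - a| fun g => by
      simpa [mul_comm] using intervalIntegral.norm_integral_le_of_norm_le_const
        (fun θ _ => g.norm_coe_le_norm (φ θ))

section Fourier

variable {T : ℝ}

lemma fourier_natCast_apply (m : ℕ) (x : AddCircle T) : fourier m x = fourier 1 x ^ m := by
  rw [fourier_apply, natCast_zsmul, AddCircle.toCircle_nsmul, fourier_one, Circle.coe_pow]

variable [hT : Fact (0 < T)]

theorem intervalIntegral_comp_eq_of_fourier {a b : ℝ} (φ ψ : C(ℝ, AddCircle T))
    (h : ∀ k : ℤ, ∫ θ in a..b, fourier k (φ θ) = ∫ θ in a..b, fourier k (ψ θ))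
    (g : C(AddCircle T, ℂ)) : ∫ θ in a..b, g (φ θ) = ∫ θ in a..b, g (ψ θ) := by
  have hL : intervalIntegralCompCLM a b φ = intervalIntegralCompCLM a b ψ := by
    refine ContinuousLinearMap.ext_on
      (Submodule.dense_iff_topologicalClosure_eq_top.mpr span_fourier_closure_eq_top) ?_
    rintro _ ⟨k, rfl⟩
    exact h k
  exact congrArg (· g) hL

theorem intervalIntegral_periodic_comp_eq_of_fourier {a b : ℝ} {φ ψ : ℝ → ℝ}
    (hφ : Continuous φ) (hψ : Continuous ψ)
    (h : ∀ k : ℤ, ∫ θ in a..b, fourier k (φ θ : AddCircle T)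
      = ∫ θ in a..b, fourier k (ψ θ : AddCircle T))
    {g : ℝ → ℝ} (hg : Continuous g) (hper : Function.Periodic g T) :
    ∫ θ in a..b, g (φ θ) = ∫ θ in a..b, g (ψ θ) := by
  have hper' : Function.Periodic (fun x => (g x : ℂ)) T := fun x => by simp only [hper x]
  obtain ⟨G, hG⟩ : ∃ G : C(AddCircle T, ℂ), ∀ x : ℝ, G x = g x :=
    ⟨⟨hper'.lift, (continuous_ofReal.comp hg).quotient_liftOn' _⟩, hper'.lift_coe⟩
  have := intervalIntegral_comp_eq_of_fourier
    ⟨fun θ => (φ θ : AddCircle T), continuous_quotient_mk'.comp hφ⟩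
    ⟨fun θ => (ψ θ : AddCircle T), continuous_quotient_mk'.comp hψ⟩ h G
  simp only [ContinuousMap.coe_mk, hG, intervalIntegral.integral_ofReal] at this
  exact_mod_cast this

lemma integral_comp_fourier_one {f : ℂ → ℂ} (hf : DiffContOnCl ℂ f (ball 0 1)) :
    ∫ θ in (0:ℝ)..T, f (fourier 1 (θ : AddCircle T)) = T * f 0 := by
  have hT0 : T ≠ 0 := hT.out.ne'
  have hc : 2 * π / T ≠ 0 := div_ne_zero (by positivity) hT0
  have hmean := (abs_one (α := ℝ) ▸ hf).circleAverage
  rw [circleAverage_def, inv_smul_eq_iff₀ (by positivity)] at hmean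
  have hcircle : ∀ θ : ℝ, fourier 1 (θ : AddCircle T) = circleMap 0 1 (2 * π / T * θ) := by
    intro θ
    rw [fourier_coe_apply, circleMap_zero, ofReal_one, one_mul]
    push_cast
    ring_nf
  simp_rw [hcircle]
  rw [intervalIntegral.integral_comp_mul_left (fun s => f (circleMap 0 1 s)) hc, mul_zero,
    div_mul_cancel₀ _ hT0, hmean, real_smul, real_smul]
  push_cast
  field_simp

lemma integral_fourier_comp_eq_zero {B : ℂ → ℂ} (hB : DiffContOnCl ℂ B (ball 0 1))
    (hB0 : B 0 = 0) {φ : ℝ → AddCircle T}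
    (hφ : ∀ θ, fourier 1 (φ θ) = B (fourier 1 (θ : AddCircle T))) {k : ℤ} (hk : k ≠ 0) :
    ∫ θ in (0:ℝ)..T, fourier k (φ θ) = 0 := by
  have hnat : ∀ m : ℕ, m ≠ 0 → ∫ θ in (0:ℝ)..T, fourier m (φ θ) = 0 := by
    intro m hm
    simp_rw [fourier_natCast_apply, hφ]
    rw [integral_comp_fourier_one (f := fun z => B z ^ m)
      ((differentiable_pow m).comp_diffContOnCl hB), hB0, zero_pow hm, mul_zero]
  obtain ⟨m, rfl | rfl⟩ := Int.eq_nat_or_neg k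
  · exact hnat m (by exact_mod_cast hk)
  · simp_rw [fourier_neg]
    calc _ = conj (∫ θ in (0:ℝ)..T, fourier m (φ θ)) :=
          conjLIE.toLinearIsometry.intervalIntegral_comp_comm _
      _ = 0 := by rw [hnat m (by simpa using hk), map_zero]

end Fourier

def toComplex (w : Fin 2 → ℝ) : ℂ := ⟨w 0, w 1⟩

def holPart (A : Mat) : ℂ := ⟨(A 0 0 + A 1 1) / 2, (A 1 0 - A 0 1) / 2⟩

def antiholPart (A : Mat) : ℂ := ⟨(A 0 0 - A 1 1) / 2, (A 1 0 + A 0 1) / 2⟩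

lemma toComplex_mulVec (A : Mat) (w : Fin 2 → ℝ) :
    toComplex (A *ᵥ w) = holPart A * toComplex w + antiholPart A * conj (toComplex w) := by
  apply Complex.ext <;>
    simp only [toComplex, holPart, antiholPart, mulVec, dotProduct, Fin.sum_univ_two, add_re,
      add_im, mul_re, mul_im, conj_re, conj_im] <;> ring

lemma toComplex_rot_mulVec (θ : ℝ) (w : Fin 2 → ℝ) :
    toComplex (Rot θ *ᵥ w) = exp (θ * I) * toComplex w := by
  apply Complex.ext <;>
    simp only [toComplex, Rot, mulVec, dotProduct, Fin.sum_univ_two, of_apply, cons_val',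
      cons_val_zero, cons_val_one, cons_val_fin_one, mul_re, mul_im, exp_ofReal_mul_I_re,
      exp_ofReal_mul_I_im] <;> ring

lemma toComplex_vec (p : ℝ) : toComplex (vec p) = exp (p * I) := by
  apply Complex.ext <;> simp [toComplex, _root_.vec, exp_ofReal_mul_I_re, exp_ofReal_mul_I_im]

lemma normSq_holPart_sub_normSq_antiholPart (A : Mat) :
    normSq (holPart A) - normSq (antiholPart A) = A.det := by
  simp only [holPart, antiholPart, normSq_mk, det_fin_two]
  ring

section DiskMap

variable {A : Mat}

lemma norm_antiholPart_lt (hA : 0 < A.det) : ‖antiholPart A‖ < ‖holPart A‖ := by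
  rw [← sq_lt_sq₀ (norm_nonneg _) (norm_nonneg _), ← normSq_eq_norm_sq, ← normSq_eq_norm_sq]
  linarith [normSq_holPart_sub_normSq_antiholPart A]

lemma holPart_mul_add_antiholPart_mul_conj_ne_zero (hA : 0 < A.det) {z : ℂ} (hz : z ≠ 0) :
    holPart A * z + antiholPart A * conj z ≠ 0 := by
  intro h
  have := congrArg norm (eq_neg_of_add_eq_zero_left h)
  rw [norm_neg, norm_mul, norm_mul, RCLike.norm_conj] at this
  exact (mul_lt_mul_of_pos_right (norm_antiholPart_lt hA) (norm_pos_iff.mpr hz)).ne' this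

def diskMap (A : Mat) (u : ℂ) : ℂ :=
  (holPart A * u + antiholPart A) / (conj (antiholPart A) * u + conj (holPart A))

lemma diskMap_denom_ne_zero (hA : 0 < A.det) {u : ℂ} (hu : ‖u‖ ≤ 1) :
    conj (antiholPart A) * u + conj (holPart A) ≠ 0 := by
  intro h
  have := congrArg norm (eq_neg_of_add_eq_zero_left h)
  rw [norm_neg, norm_mul, RCLike.norm_conj, RCLike.norm_conj] at this
  nlinarith [norm_antiholPart_lt hA, norm_nonneg (antiholPart A), norm_nonneg u]

lemma norm_diskMap_le (hA : 0 < A.det) {u : ℂ} (hu : ‖u‖ ≤ 1) : ‖diskMap A u‖ ≤ 1 := by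
  have hden := diskMap_denom_ne_zero hA hu
  have hnormSq : normSq (conj (antiholPart A) * u + conj (holPart A))
      - normSq (holPart A * u + antiholPart A) = A.det * (1 - normSq u) := by
    rw [← normSq_holPart_sub_normSq_antiholPart]
    simp only [normSq_apply, conj_re, conj_im, add_re, add_im, mul_re, mul_im]
    ring
  have hu' : normSq u ≤ 1 := by rw [normSq_eq_norm_sq]; nlinarith [norm_nonneg u]
  rw [diskMap, norm_div, div_le_one (norm_pos_iff.mpr hden),
    ← sq_le_sq₀ (norm_nonneg _) (norm_nonneg _), ← normSq_eq_norm_sq, ← normSq_eq_norm_sq]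
  nlinarith

lemma div_conj_holPart_mul_add_eq_diskMap (hA : 0 < A.det) {z : ℂ} (hz : z ≠ 0) :
    (holPart A * z + antiholPart A * conj z) / conj (holPart A * z + antiholPart A * conj z)
      = diskMap A (z / conj z) := by
  have hu : ‖z / conj z‖ ≤ 1 := by
    rw [norm_div, RCLike.norm_conj, div_self (norm_ne_zero_iff.mpr hz)]
  have hden := diskMap_denom_ne_zero hA hu
  have hw : conj (holPart A * z + antiholPart A * conj z) ≠ 0 :=
    (map_ne_zero_iff _ (RingHom.injective _)).mpr
      (holPart_mul_add_antiholPart_mul_conj_ne_zero hA hz)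
  have hz' : conj z ≠ 0 := by simpa using hz
  simp only [diskMap, map_add, map_mul, Complex.conj_conj] at hw ⊢
  rw [div_eq_div_iff hw hden]
  field_simp
  ring

end DiskMap

lemma exp_mul_I_div_conj (x : ℝ) : exp (x * I) / conj (exp (x * I)) = exp (2 * x * I) := by
  rw [← Complex.exp_conj, ← Complex.exp_sub]
  simp only [map_mul, conj_ofReal, conj_I]
  ring_nf

def blaschke (u₀ : ℂ) : List Mat → ℂ → ℂ
  | [], _ => u₀
  | A :: l, z => z * diskMap A (blaschke u₀ l z)

section Blaschke

variable {u₀ : ℂ} {l : List Mat}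

lemma norm_blaschke_le (hu₀ : ‖u₀‖ ≤ 1) (hl : ∀ A ∈ l, 0 < A.det) {z : ℂ} (hz : ‖z‖ ≤ 1) :
    ‖blaschke u₀ l z‖ ≤ 1 := by
  induction l with
  | nil => exact hu₀
  | cons A l ih =>
    rw [blaschke, norm_mul]
    have hA := hl A List.mem_cons_self
    have hl' := fun B hB => hl B (List.mem_cons_of_mem A hB)
    exact mul_le_one₀ hz (norm_nonneg _) (norm_diskMap_le hA (ih hl'))

lemma differentiableOn_blaschke (hu₀ : ‖u₀‖ ≤ 1) (hl : ∀ A ∈ l, 0 < A.det) :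
    DifferentiableOn ℂ (blaschke u₀ l) (closedBall 0 1) := by
  induction l with
  | nil => exact differentiableOn_const u₀
  | cons A l ih =>
    have hA := hl A List.mem_cons_self
    have hl' := fun B hB => hl B (List.mem_cons_of_mem A hB)
    have hden : ∀ z ∈ closedBall (0 : ℂ) 1,
        conj (antiholPart A) * blaschke u₀ l z + conj (holPart A) ≠ 0 := fun z hz =>
      diskMap_denom_ne_zero hA (norm_blaschke_le hu₀ hl' (by simpa using hz))
    have hl'' := ih hl'
    exact differentiableOn_id.mul
      (((hl''.const_mul _).add_const _).div ((hl''.const_mul _).add_const _) hden)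

lemma toComplex_wp_mulVec_vec (hl : ∀ A ∈ l, 0 < A.det) (p θ : ℝ) :
    toComplex (Wp θ l *ᵥ vec p) ≠ 0 ∧
      toComplex (Wp θ l *ᵥ vec p) / conj (toComplex (Wp θ l *ᵥ vec p))
        = blaschke (exp (2 * p * I)) l (exp (2 * θ * I)) := by
  induction l with
  | nil =>
    simp only [Wp, List.map_nil, List.prod_nil, one_mulVec, toComplex_vec, blaschke]
    exact ⟨Complex.exp_ne_zero _, exp_mul_I_div_conj p⟩
  | cons A l ih =>
    have hA := hl A List.mem_cons_self
    obtain ⟨hz, hratio⟩ := ih fun B hB => hl B (List.mem_cons_of_mem A hB)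
    set z := toComplex (Wp θ l *ᵥ vec p)
    have hw : toComplex (Wp θ (A :: l) *ᵥ vec p)
        = exp (θ * I) * (holPart A * z + antiholPart A * conj z) := by
      rw [Wp, List.map_cons, List.prod_cons, ← mulVec_mulVec, ← mulVec_mulVec,
        toComplex_rot_mulVec, toComplex_mulVec, ← Wp]
    have hne := holPart_mul_add_antiholPart_mul_conj_ne_zero hA hz
    refine ⟨hw ▸ mul_ne_zero (Complex.exp_ne_zero _) hne, ?_⟩
    rw [hw, blaschke, ← hratio, ← div_conj_holPart_mul_add_eq_diskMap hA hz, map_mul,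
      mul_div_mul_comm, exp_mul_I_div_conj]

end Blaschke

lemma toComplex_eq_ofReal_mul_exp_of_parr {w : Fin 2 → ℝ} {q : ℝ} (h : parr w q) :
    toComplex w = ((w 0 * Real.cos q + w 1 * Real.sin q : ℝ) : ℂ) * exp (q * I) := by
  rw [parr] at h
  apply Complex.ext <;>
    simp only [toComplex, re_ofReal_mul, im_ofReal_mul, exp_ofReal_mul_I_re, exp_ofReal_mul_I_im]
  · linear_combination Real.sin q * h - w 0 * Real.sin_sq_add_cos_sq q
  · linear_combination -Real.cos q * h - w 1 * Real.sin_sq_add_cos_sq q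

lemma div_conj_toComplex_of_parr {w : Fin 2 → ℝ} {q : ℝ} (h : parr w q) (hw : toComplex w ≠ 0) :
    toComplex w / conj (toComplex w) = exp (2 * q * I) := by
  rw [toComplex_eq_ofReal_mul_exp_of_parr h] at hw ⊢
  rw [map_mul, conj_ofReal, mul_div_mul_left _ _ (left_ne_zero_of_mul hw), exp_mul_I_div_conj]

lemma fourier_one_coe_pi (x : ℝ) : fourier 1 (x : AddCircle π) = exp (2 * x * I) := by
  rw [fourier_coe_apply]
  congr 1
  field_simp [ofReal_ne_zero.mpr Real.pi_ne_zero]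
  push_cast
  ring

/-- For fixed `p`, the map `θ ↦ Φ_{(R_θA₁)⋯(R_θAₙ)}(p)` preserves the Haar measure on
P¹ = ℝ/πℤ: integrals of π-periodic continuous functions are preserved. -/
theorem stmt10 (n : ℕ) (hn : 1 ≤ n) (A : Fin n → Mat) (hdet : ∀ i, (A i).det = 1)
    (p : ℝ) (F : ℝ → ℝ) (hFc : Continuous F)
    (hF : ∀ θ : ℝ, parr ((Wp θ (List.ofFn A)).mulVec (vec p)) (F θ)) :
    ∀ g : ℝ → ℝ, Continuous g → (∀ x, g (x + π) = g x) →
      ∫ θ in (0:ℝ)..π, g (F θ) = ∫ θ in (0:ℝ)..π, g θ := by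
  intro g hg hper
  have : Fact (0 < π) := ⟨Real.pi_pos⟩
  obtain ⟨m, rfl⟩ : ∃ m, n = m + 1 := ⟨n - 1, by omega⟩
  have hl : ∀ B ∈ List.ofFn A, 0 < B.det := by
    simp [List.mem_ofFn, hdet]
  set B := blaschke (exp (2 * p * I)) (List.ofFn A)
  have hB : DiffContOnCl ℂ B (ball 0 1) := by
    refine DifferentiableOn.diffContOnCl ?_
    rw [closure_ball _ one_ne_zero]
    exact differentiableOn_blaschke (by rw [norm_exp]; simp) hl
  have hB0 : B 0 = 0 := by simp [B, List.ofFn_succ, blaschke]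
  have hFB : ∀ θ : ℝ, fourier 1 (F θ : AddCircle π) = B (fourier 1 (θ : AddCircle π)) := by
    intro θ
    obtain ⟨hne, hratio⟩ := toComplex_wp_mulVec_vec hl p θ
    rw [fourier_one_coe_pi, fourier_one_coe_pi, ← div_conj_toComplex_of_parr (hF θ) hne]
    exact hratio
  refine intervalIntegral_periodic_comp_eq_of_fourier hFc (ψ := fun θ => θ) continuous_id
    (fun k => ?_) hg hper
  rcases eq_or_ne k 0 with rfl | hk
  · simp only [fourier_zero]
  · rw [integral_fourier_comp_eq_zero hB hB0 hFB hk,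
      integral_fourier_comp_eq_zero differentiable_id.diffContOnCl rfl (fun _ => rfl) hk]
end
end
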